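/- For a simple commutator c = [x_{i₁}, [x_{i₂}, […[x_{i_{q−1}}, x_{i_q}]…]]] in the free group F(n), the abelianized Fox derivative satisfies α(∂_i c) = (t_{i₁}−1)⋯(t_{i_{q−2}}−1)·((t_{i_{q−1}}−1)δ_{i,i_q} − (t_{i_q}−1)δ_{i,i_{q−1}}) in the Laurent polynomial ring Z[t₁^{±1},…,t_n^{±1}]. -/

import Mathlib

/-! Fox free differential calculus on the free group `F(n)`, with values in the
integral group ring `ℤF`. -/

/-- The integral group ring of the free group on `n` generators. -/
abbrev FreeGroupRing (n : ℕ) := MonoidAlgebra ℤ (FreeGroup (Fin n))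

/-- Left multiplication by a group element, as an additive automorphism of `ℤF`. -/
noncomputable def lmulAut {n : ℕ} (g : FreeGroup (Fin n)) :
    FreeGroupRing n ≃+ FreeGroupRing n where
  toFun a := MonoidAlgebra.of ℤ (FreeGroup (Fin n)) g * a
  invFun a := MonoidAlgebra.of ℤ (FreeGroup (Fin n)) g⁻¹ * a
  left_inv a := by
    show MonoidAlgebra.of ℤ (FreeGroup (Fin n)) g⁻¹ *
        (MonoidAlgebra.of ℤ (FreeGroup (Fin n)) g * a) = a
    rw [← mul_assoc, ← map_mul, inv_mul_cancel, map_one, one_mul]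
  right_inv a := by
    show MonoidAlgebra.of ℤ (FreeGroup (Fin n)) g *
        (MonoidAlgebra.of ℤ (FreeGroup (Fin n)) g⁻¹ * a) = a
    rw [← mul_assoc, ← map_mul, mul_inv_cancel, map_one, one_mul]
  map_add' a b := mul_add _ a b

/-- The action of `F(n)` on `ℤF` by left multiplication, as a homomorphism to the
multiplicative automorphisms of the (multiplicatively written) additive group `ℤF`. -/
noncomputable def foxAction (n : ℕ) :
    FreeGroup (Fin n) →* MulAut (Multiplicative (FreeGroupRing n)) where
  toFun g := AddEquiv.toMultiplicative (lmulAut g)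
  map_one' := by
    refine MulEquiv.ext fun a => ?_
    show Multiplicative.ofAdd (MonoidAlgebra.single 1 1 * Multiplicative.toAdd a) = a
    simp [MonoidAlgebra.one_def.symm]
  map_mul' g h := by
    refine MulEquiv.ext fun a => ?_
    show MonoidAlgebra.single (g * h) 1 * Multiplicative.toAdd a =
      MonoidAlgebra.single g 1 * (MonoidAlgebra.single h 1 * Multiplicative.toAdd a)
    rw [← mul_assoc, MonoidAlgebra.single_mul_single, mul_one]

/-- The homomorphism `F(n) → ℤF ⋊ F(n)` whose first component computes the `i`-th
Fox derivative: it sends `x_j` to `(δ_{ij}, x_j)`. -/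
noncomputable def foxHom {n : ℕ} (i : Fin n) :
    FreeGroup (Fin n) →* SemidirectProduct (Multiplicative (FreeGroupRing n))
      (FreeGroup (Fin n)) (foxAction n) :=
  FreeGroup.lift fun j =>
    ⟨Multiplicative.ofAdd (if j = i then (1 : FreeGroupRing n) else 0), FreeGroup.of j⟩

/-- The `i`-th Fox derivative `∂_i : F(n) → ℤF`, characterized by `∂_i(x_j) = δ_{ij}`
and `∂_i(uv) = ∂_i(u) + u·∂_i(v)`. -/
noncomputable def foxDeriv {n : ℕ} (i : Fin n) (w : FreeGroup (Fin n)) : FreeGroupRing n :=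
  Multiplicative.toAdd (foxHom i w).left

/-- The `ℤ`-linear extension of the Fox derivative to the group ring `ℤF`. -/
noncomputable def foxDerivLin {n : ℕ} (i : Fin n) : FreeGroupRing n →ₗ[ℤ] FreeGroupRing n :=
  Finsupp.lift (FreeGroupRing n) ℤ (FreeGroup (Fin n)) (foxDeriv i) ∘ₗ
    (MonoidAlgebra.coeffLinearEquiv ℤ).toLinearMap

/-- The augmentation map `ε : ℤF → ℤ`, sending every group element to `1`. -/
noncomputable def augmentation (n : ℕ) : FreeGroupRing n →ₐ[ℤ] ℤ :=
  MonoidAlgebra.lift ℤ ℤ (FreeGroup (Fin n)) 1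

/-- Iterated Fox derivatives `∂_{i₁} ∘ ⋯ ∘ ∂_{i_k}` (applied right-to-left). -/
noncomputable def foxIter {n : ℕ} : List (Fin n) → FreeGroupRing n → FreeGroupRing n
  | [], a => a
  | i :: I, a => foxDerivLin i (foxIter I a)

/-- The composite `ε_I = ε ∘ ∂_{i₁} ∘ ⋯ ∘ ∂_{i_k}` applied to a group element. -/
noncomputable def epsFox {n : ℕ} (I : List (Fin n)) (w : FreeGroup (Fin n)) : ℤ :=
  augmentation n (foxIter I (MonoidAlgebra.of ℤ (FreeGroup (Fin n)) w))

/-- The ring of integral Laurent polynomials in `n` variables, realized as the group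
ring of `ℤⁿ`. -/
abbrev LaurentRing (n : ℕ) := MonoidAlgebra ℤ (Multiplicative (Fin n → ℤ))

/-- The abelianization homomorphism `F(n) → ℤⁿ`, `x_i ↦ t_i`. -/
noncomputable def abHom (n : ℕ) : FreeGroup (Fin n) →* Multiplicative (Fin n → ℤ) :=
  FreeGroup.lift fun i => Multiplicative.ofAdd (Pi.single i 1)

/-- The induced ring homomorphism `α : ℤF → ℤ[t₁^{±1},…,t_n^{±1}]`. -/
noncomputable def alexMap (n : ℕ) : FreeGroupRing n →ₐ[ℤ] LaurentRing n :=
  MonoidAlgebra.lift ℤ (LaurentRing n) (FreeGroup (Fin n))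
    ((MonoidAlgebra.of ℤ (Multiplicative (Fin n → ℤ))).comp (abHom n))

/-- The Laurent variable `t_j`. -/
noncomputable def tvar {n : ℕ} (j : Fin n) : LaurentRing n :=
  MonoidAlgebra.of ℤ (Multiplicative (Fin n → ℤ)) (Multiplicative.ofAdd (Pi.single j 1))

open scoped commutatorElement

/-
From the product rule, `∂[u,v] = (1 - u v u⁻¹) ∂u + (u - [u,v]) ∂v`. After any ring
homomorphism to a commutative ring the conjugate `u v u⁻¹` becomes `v` and the commutator becomes
`1`, so the image is `(1 - v) ∂u + (u - 1) ∂v`. For `c = [x_j, w]` with `w` itself a commutator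
this leaves `(t_j - 1) α(∂w)`, and induction on the list reduces to `[x_a, x_b]`.
-/

section FoxCalculus

variable {n : ℕ}

theorem foxHom_right (i : Fin n) (w : FreeGroup (Fin n)) : (foxHom i w).right = w := by
  have h : SemidirectProduct.rightHom.comp (foxHom i) = MonoidHom.id (FreeGroup (Fin n)) :=
    FreeGroup.ext_hom _ _ fun j => by simp [foxHom]
  exact DFunLike.congr_fun h w

theorem foxDeriv_one (i : Fin n) : foxDeriv i 1 = 0 := by
  simp only [foxDeriv, map_one]
  rfl

theorem foxDeriv_mul (i : Fin n) (u v : FreeGroup (Fin n)) :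
    foxDeriv i (u * v) = foxDeriv i u + MonoidAlgebra.of ℤ _ u * foxDeriv i v := by
  rw [foxDeriv, map_mul, SemidirectProduct.mul_left, foxHom_right]
  rfl

theorem foxDeriv_inv (i : Fin n) (u : FreeGroup (Fin n)) :
    foxDeriv i u⁻¹ = -(MonoidAlgebra.of ℤ _ u⁻¹ * foxDeriv i u) := by
  have h := foxDeriv_mul i u⁻¹ u
  rw [inv_mul_cancel, foxDeriv_one] at h
  exact eq_neg_of_add_eq_zero_left h.symm

theorem foxDeriv_of [DecidableEq (Fin n)] (i j : Fin n) :
    foxDeriv i (FreeGroup.of j) = if i = j then 1 else 0 := by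
  simp [foxDeriv, foxHom, eq_comm]

theorem foxDeriv_commutator (i : Fin n) (u v : FreeGroup (Fin n)) :
    foxDeriv i ⁅u, v⁆ =
      (1 - MonoidAlgebra.of ℤ _ (u * v * u⁻¹)) * foxDeriv i u +
        (MonoidAlgebra.of ℤ _ u - MonoidAlgebra.of ℤ _ ⁅u, v⁆) * foxDeriv i v := by
  simp only [commutatorElement_def, foxDeriv_mul, foxDeriv_inv, map_mul]
  noncomm_ring

end FoxCalculus

section CommutativeImage

variable {G R F : Type*} [Group G] [CommRing R] [FunLike F (MonoidAlgebra ℤ G) R]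
  [RingHomClass F (MonoidAlgebra ℤ G) R] (φ : F)

theorem map_of_conj (u v : G) :
    φ (MonoidAlgebra.of ℤ G (u * v * u⁻¹)) = φ (MonoidAlgebra.of ℤ G v) := by
  rw [map_mul (MonoidAlgebra.of ℤ G), map_mul (MonoidAlgebra.of ℤ G), map_mul φ, map_mul φ,
    mul_right_comm, ← map_mul φ, ← map_mul (MonoidAlgebra.of ℤ G), mul_inv_cancel, map_one,
    map_one, one_mul]

theorem map_of_commutatorElement (u v : G) : φ (MonoidAlgebra.of ℤ G ⁅u, v⁆) = 1 := by
  rw [commutatorElement_def, map_mul, map_mul, map_of_conj, ← map_mul, ← map_mul, mul_inv_cancel,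
    map_one, map_one]

end CommutativeImage

theorem map_foxDeriv_commutator {n : ℕ} {R F : Type*} [CommRing R] [FunLike F (FreeGroupRing n) R]
    [RingHomClass F (FreeGroupRing n) R] (φ : F) (i : Fin n) (u v : FreeGroup (Fin n)) :
    φ (foxDeriv i ⁅u, v⁆) =
      (1 - φ (MonoidAlgebra.of ℤ _ v)) * φ (foxDeriv i u) +
        (φ (MonoidAlgebra.of ℤ _ u) - 1) * φ (foxDeriv i v) := by
  rw [foxDeriv_commutator, map_add φ, map_mul φ, map_mul φ, map_sub φ, map_sub φ, map_one φ,
    map_of_conj, map_of_commutatorElement]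

theorem exists_foldr_commutatorElement_eq {α G : Type*} [Group G] (f : α → G) (l : List α)
    (x y : G) : ∃ u v : G, l.foldr (fun j w => ⁅f j, w⁆) ⁅x, y⁆ = ⁅u, v⁆ := by
  cases l <;> exact ⟨_, _, rfl⟩

theorem alexMap_of_of {n : ℕ} (j : Fin n) :
    alexMap n (MonoidAlgebra.of ℤ _ (FreeGroup.of j)) = tvar j := by
  rw [alexMap, MonoidAlgebra.lift_of, MonoidHom.comp_apply, abHom, FreeGroup.lift_apply_of]
  rfl

/-- For a simple commutator `c = [x_{i₁}, [x_{i₂}, […[x_{i_{q−1}}, x_{i_q}]…]]]` in the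
free group `F(n)` (here written with the initial indices given by the list `l` and the
last two indices `a`, `b`), the abelianized Fox derivative satisfies
`α(∂_i c) = (t_{i₁}−1)⋯(t_{i_{q−2}}−1)·((t_{i_{q−1}}−1)δ_{i,i_q} − (t_{i_q}−1)δ_{i,i_{q−1}})`. -/
theorem alexMap_foxDeriv_simple_commutator {n : ℕ} [DecidableEq (Fin n)]
    (l : List (Fin n)) (a b i : Fin n) :
    alexMap n (foxDeriv i
        (l.foldr (fun j w => ⁅FreeGroup.of j, w⁆) ⁅FreeGroup.of a, FreeGroup.of b⁆)) =
      (l.map fun j => tvar j - 1).prod *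
        ((tvar a - 1) * (if i = b then 1 else 0) - (tvar b - 1) * (if i = a then 1 else 0)) := by
  induction l with
  | nil =>
    rw [List.foldr_nil, map_foxDeriv_commutator, foxDeriv_of, foxDeriv_of, alexMap_of_of,
      alexMap_of_of, List.map_nil, List.prod_nil, apply_ite (alexMap n), apply_ite (alexMap n),
      map_one, map_zero]
    ring
  | cons j l ih =>
    obtain ⟨u, v, hw⟩ :=
      exists_foldr_commutatorElement_eq FreeGroup.of l (FreeGroup.of a) (FreeGroup.of b)
    rw [List.foldr_cons, map_foxDeriv_commutator, hw, map_of_commutatorElement, ← hw, ih,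
      alexMap_of_of, List.map_cons, List.prod_cons]
    ring
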